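/- Let φ = c_1 ∧ … ∧ c_m be a satisfiable propositional 3-CNF formula over variables x_1, …, x_n whose literals are variables or their negations, let k ∈ {1, …, n}, and let ν_max be the lexicographically maximum truth assignment satisfying φ with respect to the ordering (x_1, …, x_n). Define the WKB K_ω = (T, A)_ω where A = {p_ℓ(c_j, x_i) | x_i is the ℓ-th literal of c_j} ∪ {n_ℓ(c_j, x_i) | ¬x_i is the ℓ-th literal of c_j} ∪ {T(x_i) | 1 ≤ i ≤ n}, and T consists of: ∃n_ℓ^- ⊑ ¬T for 1 ≤ ℓ ≤ 3; ∃p_ℓ ⊑ ¬∃n_{ℓ'} and ∃p_ℓ^- ⊑ ¬∃n_{ℓ'}^- for 1 ≤ ℓ, ℓ' ≤ 3; and ∃p_ℓ ⊑ ¬∃p_{ℓ'} and ∃n_ℓ ⊑ ¬∃n_{ℓ'} for 1 ≤ ℓ ≠ ℓ' ≤ 3. Let ω(τ) = ∞ for every τ ∈ T, and with u = 3m + 1 let ω(α) = u^n for every role assertion α and ω(T(x_i)) = u^{n-i} for every 1 ≤ i ≤ n. Then K_ω ⊨_c^opt T(x_k) iff K_ω ⊨_p^opt T(x_k) iff ν_max(x_k)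 = 1. -/

import Mathlib

namespace DL

/-! ### Syntax -/

abbrev IndName := ℕ
abbrev CName := ℕ
abbrev RName := ℕ

/-- Roles: role names and inverse roles. -/
inductive Role where
  | name : RName → Role
  | inv  : RName → Role
deriving DecidableEq

/-- `ALCHIO` concepts. -/
inductive Concept where
  | top  : Concept
  | bot  : Concept
  | atom : CName → Concept
  | nom  : IndName → Concept
  | neg  : Concept → Concept
  | conj : Concept → Concept → Concept
  | ex   : Role → Concept → Concept
deriving DecidableEq

/-- TBox axioms: concept inclusions and role inclusions. -/
inductive Axiom where
  | ci : Concept → Concept → Axiom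
  | ri : Role → Role → Axiom
deriving DecidableEq

/-- ABox assertions. -/
inductive Assertion where
  | ca : CName → IndName → Assertion
  | ra : RName → IndName → IndName → Assertion
deriving DecidableEq

/-! ### Interpretations -/

/-- A DL interpretation with domain a subset of a universe `U`.  Individual names are
interpreted via `indI` (under the standard names assumption, the individual names of the
ABox under consideration are interpreted "as themselves", i.e. injectively). -/
structure Interp (U : Type) where
  dom : Set U
  indI : IndName → U
  cI : CName → Set U
  rI : RName → Set (U × U)
  cI_sub : ∀ A, cI A ⊆ dom
  rI_sub : ∀ r p, p ∈ rI r → p.1 ∈ dom ∧ p.2 ∈ dom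

variable {U : Type}

/-- Every individual name denotes an element of the domain. -/
def Interp.Proper (I : Interp U) : Prop := ∀ a, I.indI a ∈ I.dom

def Role.interp (I : Interp U) : Role → Set (U × U)
  | Role.name r => I.rI r
  | Role.inv r  => {p | (p.2, p.1) ∈ I.rI r}

def Concept.interp (I : Interp U) : Concept → Set U
  | Concept.top => I.dom
  | Concept.bot => ∅
  | Concept.atom A => I.cI A
  | Concept.nom a => {I.indI a} ∩ I.dom
  | Concept.neg C => I.dom \ Concept.interp I C
  | Concept.conj C D => Concept.interp I C ∩ Concept.interp I D
  | Concept.ex r C => {d | ∃ e, (d, e) ∈ Role.interp I r ∧ e ∈ Concept.interp I C}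

def Assertion.sat (I : Interp U) : Assertion → Prop
  | Assertion.ca A a => I.indI a ∈ I.cI A
  | Assertion.ra r a b => (I.indI a, I.indI b) ∈ I.rI r

/-! ### Violations and cost -/

/-- Violations of a concept inclusion `C ⊑ D`. -/
def vioCI (I : Interp U) (C D : Concept) : Set U :=
  Concept.interp I C \ Concept.interp I D

/-- Violations of a role inclusion `r ⊑ s`. -/
def vioRI (I : Interp U) (r s : Role) : Set (U × U) :=
  Role.interp I r \ Role.interp I s

/-- The number of violations of an axiom. -/
noncomputable def Axiom.vioCount (I : Interp U) : Axiom → ℕ∞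
  | Axiom.ci C D => (vioCI I C D).encard
  | Axiom.ri r s => (vioRI I r s).encard

open Classical in
/-- The cost of an interpretation w.r.t. a weighted knowledge base `(T, A)` with weight
functions `wT` (on TBox axioms) and `wA` (on ABox assertions). -/
noncomputable def cost (T : Finset Axiom) (A : Finset Assertion)
    (wT : Axiom → ℕ∞) (wA : Assertion → ℕ∞) (I : Interp U) : ℕ∞ :=
  (∑ τ ∈ T, wT τ * Axiom.vioCount I τ) +
    ∑ α ∈ A, (if Assertion.sat I α then 0 else wA α)

/-! ### Queries -/

inductive Term where
  | var : ℕ → Term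
  | ind : IndName → Term
deriving DecidableEq

inductive QAtom where
  | ca : CName → Term → QAtom
  | ra : RName → Term → Term → QAtom
deriving DecidableEq

/-- A Boolean conjunctive query: a finite set of atoms, all of whose variables are
(implicitly) existentially quantified. -/
abbrev BCQ := Finset QAtom

def Term.eval (I : Interp U) (π : ℕ → U) : Term → U
  | Term.var v => π v
  | Term.ind a => I.indI a

def QAtom.sat (I : Interp U) (π : ℕ → U) : QAtom → Prop
  | QAtom.ca A t => Term.eval I π t ∈ I.cI A
  | QAtom.ra r t t' => (Term.eval I π t, Term.eval I π t') ∈ I.rI r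

/-- Satisfaction of a BCQ in an interpretation. -/
def satQ (I : Interp U) (q : BCQ) : Prop :=
  ∃ π : ℕ → U, (∀ v, π v ∈ I.dom) ∧ ∀ a ∈ q, QAtom.sat I π a

/-- An instance query is a BCQ with a single atom. -/
def IsIQ (q : BCQ) : Prop := ∃ a : QAtom, q = {a}

/-! ### Cost-based semantics -/

/-- `k`-satisfiability: some interpretation has cost at most `k`. -/
def ksat (T : Finset Axiom) (A : Finset Assertion)
    (wT : Axiom → ℕ∞) (wA : Assertion → ℕ∞) (k : ℕ) : Prop :=
  ∃ (U : Type) (I : Interp U), I.Proper ∧ cost T A wT wA I ≤ (k : ℕ∞)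

/-- `K ⊨ₚᵏ q`: some interpretation of cost at most `k` satisfies `q`. -/
def satP (T : Finset Axiom) (A : Finset Assertion)
    (wT : Axiom → ℕ∞) (wA : Assertion → ℕ∞) (k : ℕ) (q : BCQ) : Prop :=
  ∃ (U : Type) (I : Interp U), I.Proper ∧ cost T A wT wA I ≤ (k : ℕ∞) ∧ satQ I q

/-- `K ⊨꜀ᵏ q`: every interpretation of cost at most `k` satisfies `q`. -/
def satC (T : Finset Axiom) (A : Finset Assertion)
    (wT : Axiom → ℕ∞) (wA : Assertion → ℕ∞) (k : ℕ) (q : BCQ) : Prop :=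
  ∀ (U : Type) (I : Interp U), I.Proper → cost T A wT wA I ≤ (k : ℕ∞) → satQ I q

/-- The optimal cost of a weighted knowledge base. -/
noncomputable def optCost (T : Finset Axiom) (A : Finset Assertion)
    (wT : Axiom → ℕ∞) (wA : Assertion → ℕ∞) : ℕ∞ :=
  sInf {c : ℕ∞ | ∃ (U : Type) (I : Interp U), I.Proper ∧ cost T A wT wA I = c}

/-- `K ⊨ₚᵒᵖᵗ q`: some interpretation of optimal cost satisfies `q`. -/
noncomputable def satPopt (T : Finset Axiom) (A : Finset Assertion)
    (wT : Axiom → ℕ∞) (wA : Assertion → ℕ∞) (q : BCQ) : Prop :=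
  ∃ (U : Type) (I : Interp U), I.Proper ∧ cost T A wT wA I = optCost T A wT wA ∧ satQ I q

/-- `K ⊨꜀ᵒᵖᵗ q`: every interpretation of optimal cost satisfies `q`. -/
noncomputable def satCopt (T : Finset Axiom) (A : Finset Assertion)
    (wT : Axiom → ℕ∞) (wA : Assertion → ℕ∞) (q : BCQ) : Prop :=
  ∀ (U : Type) (I : Interp U), I.Proper → cost T A wT wA I = optCost T A wT wA → satQ I q

/-! ### Occurrences of symbols -/

def Role.base : Role → RName
  | Role.name r => r
  | Role.inv r => r

def Concept.cnames : Concept → Finset CName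
  | Concept.atom A => {A}
  | Concept.neg C => C.cnames
  | Concept.conj C D => C.cnames ∪ D.cnames
  | Concept.ex _ C => C.cnames
  | _ => ∅

def Concept.rnames : Concept → Finset RName
  | Concept.neg C => C.rnames
  | Concept.conj C D => C.rnames ∪ D.rnames
  | Concept.ex r C => insert r.base C.rnames
  | _ => ∅

def Concept.indNames : Concept → Finset IndName
  | Concept.nom a => {a}
  | Concept.neg C => C.indNames
  | Concept.conj C D => C.indNames ∪ D.indNames
  | Concept.ex _ C => C.indNames
  | _ => ∅

def Axiom.cnames : Axiom → Finset CName
  | Axiom.ci C D => C.cnames ∪ D.cnames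
  | Axiom.ri _ _ => ∅

def Axiom.rnames : Axiom → Finset RName
  | Axiom.ci C D => C.rnames ∪ D.rnames
  | Axiom.ri r s => {r.base, s.base}

def Axiom.indNames : Axiom → Finset IndName
  | Axiom.ci C D => C.indNames ∪ D.indNames
  | Axiom.ri _ _ => ∅

def Assertion.cnames : Assertion → Finset CName
  | Assertion.ca A _ => {A}
  | Assertion.ra _ _ _ => ∅

def Assertion.rnames : Assertion → Finset RName
  | Assertion.ca _ _ => ∅
  | Assertion.ra r _ _ => {r}

def Assertion.indNames : Assertion → Finset IndName
  | Assertion.ca _ a => {a}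
  | Assertion.ra _ a b => {a, b}

/-- The individual names occurring in an ABox. -/
def aboxInds (A : Finset Assertion) : Finset IndName := A.biUnion Assertion.indNames

/-- The individual names occurring in a KB. -/
def kbInds (T : Finset Axiom) (A : Finset Assertion) : Finset IndName :=
  T.biUnion Axiom.indNames ∪ aboxInds A

def Term.indNames : Term → Finset IndName
  | Term.var _ => ∅
  | Term.ind a => {a}

def QAtom.indNames : QAtom → Finset IndName
  | QAtom.ca _ t => t.indNames
  | QAtom.ra _ t t' => t.indNames ∪ t'.indNames

def QAtom.cnames : QAtom → Finset CName
  | QAtom.ca A _ => {A}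
  | QAtom.ra _ _ _ => ∅

def qInds (q : BCQ) : Finset IndName := q.biUnion QAtom.indNames

def qCnames (q : BCQ) : Finset CName := q.biUnion QAtom.cnames

/-! ### Sizes -/

def Concept.size : Concept → ℕ
  | Concept.top => 1
  | Concept.bot => 1
  | Concept.atom _ => 1
  | Concept.nom _ => 1
  | Concept.neg C => C.size + 1
  | Concept.conj C D => C.size + D.size + 1
  | Concept.ex _ C => C.size + 2

def Axiom.size : Axiom → ℕ
  | Axiom.ci C D => C.size + D.size + 1
  | Axiom.ri _ _ => 3

def Assertion.size : Assertion → ℕ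
  | Assertion.ca _ _ => 2
  | Assertion.ra _ _ _ => 3

def tboxSize (T : Finset Axiom) : ℕ := ∑ τ ∈ T, τ.size

def aboxSize (A : Finset Assertion) : ℕ := ∑ α ∈ A, α.size

/-! ### DL-Lite fragments -/

/-- Basic concepts: concept names and unqualified existential restrictions `∃r` (with a
possibly inverse role `r`), the latter rendered as `∃r.⊤`. -/
inductive IsBasic : Concept → Prop
  | atom (A : CName) : IsBasic (Concept.atom A)
  | ex (r : Role) : IsBasic (Concept.ex r Concept.top)

/-- A `DL-Lite_core` axiom: `B ⊑ C` or `B ⊓ C ⊑ ⊥` with `B, C` basic concepts. -/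
def IsCoreAxiom (τ : Axiom) : Prop :=
  (∃ B C, τ = Axiom.ci B C ∧ IsBasic B ∧ IsBasic C) ∨
  (∃ B C, τ = Axiom.ci (Concept.conj B C) Concept.bot ∧ IsBasic B ∧ IsBasic C)

def IsDLLiteCore (T : Finset Axiom) : Prop := ∀ τ ∈ T, IsCoreAxiom τ

/-- Concepts built from basic concepts using `¬`, `⊓` (and hence also `⊔`). -/
inductive IsBoolConcept : Concept → Prop
  | basic {C} : IsBasic C → IsBoolConcept C
  | neg {C} : IsBoolConcept C → IsBoolConcept (Concept.neg C)
  | conj {C D} : IsBoolConcept C → IsBoolConcept D → IsBoolConcept (Concept.conj C D)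

/-- A `DL-Lite_bool^H` axiom: a concept inclusion between Boolean combinations of basic
concepts, or a role inclusion. -/
def IsBoolHAxiom (τ : Axiom) : Prop :=
  (∃ C D, τ = Axiom.ci C D ∧ IsBoolConcept C ∧ IsBoolConcept D) ∨ (∃ r s, τ = Axiom.ri r s)

def IsDLLiteBoolH (T : Finset Axiom) : Prop := ∀ τ ∈ T, IsBoolHAxiom τ

/-! Encoding of a 3-CNF formula `φ = c_0 ∧ … ∧ c_{m-1}` over variables `x_0,…,x_{n-1}`:
`φ j ℓ = (b, x)` where `b = true` iff the `ℓ`-th literal of `c_j` is the positive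
literal `x` (and `b = false` iff it is `¬x`). -/

/-- The concept name `T` ("true"). -/
def cT : CName := 0

/-- Role names `p_ℓ` and `n_ℓ`. -/
def pR (l : Fin 3) : RName := (l : ℕ)
def nR (l : Fin 3) : RName := 3 + (l : ℕ)

/-- Individual names for variables and clauses. -/
def xN (i : Fin n') : IndName := (i : ℕ)
def clN (n : ℕ) (j : Fin m') : IndName := n + (j : ℕ)

def exR (r : RName) : Concept := Concept.ex (Role.name r) Concept.top
def exRinv (r : RName) : Concept := Concept.ex (Role.inv r) Concept.top

/-- The `DL-Lite_core` TBox of the reduction. -/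
def lexTbox : Finset Axiom :=
  ((Finset.univ : Finset (Fin 3)).image
    fun l => Axiom.ci (exRinv (nR l)) (Concept.neg (Concept.atom cT))) ∪
  ((Finset.univ : Finset (Fin 3 × Fin 3)).image
    fun x => Axiom.ci (exR (pR x.1)) (Concept.neg (exR (nR x.2)))) ∪
  ((Finset.univ : Finset (Fin 3 × Fin 3)).image
    fun x => Axiom.ci (exRinv (pR x.1)) (Concept.neg (exRinv (nR x.2)))) ∪
  (((Finset.univ : Finset (Fin 3 × Fin 3)).filter fun x => x.1 ≠ x.2).image
    fun x => Axiom.ci (exR (pR x.1)) (Concept.neg (exR (pR x.2)))) ∪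
  (((Finset.univ : Finset (Fin 3 × Fin 3)).filter fun x => x.1 ≠ x.2).image
    fun x => Axiom.ci (exR (nR x.1)) (Concept.neg (exR (nR x.2))))

/-- The ABox of the reduction. -/
def lexAbox (m n : ℕ) (φ : Fin m → Fin 3 → Bool × Fin n) : Finset Assertion :=
  (Finset.univ.image fun p : Fin m × Fin 3 =>
    if (φ p.1 p.2).1 then Assertion.ra (pR p.2) (clN n p.1) (xN (φ p.1 p.2).2)
    else Assertion.ra (nR p.2) (clN n p.1) (xN (φ p.1 p.2).2)) ∪
  (Finset.univ.image fun i : Fin n => Assertion.ca cT (xN i))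

/-- The weight function on assertions: with `u = 3m + 1`, every role assertion gets
weight `u^n` and the assertion `T(x_i)` gets weight `u^(n-1-i)` (for the 0-indexed
variable `x_i`, corresponding to `u^(n-i)` in 1-indexed notation). -/
noncomputable def lexWA (m n : ℕ) : Assertion → ℕ∞
  | Assertion.ca _ i => ((3 * m + 1 : ℕ) : ℕ∞) ^ (n - 1 - i)
  | Assertion.ra _ _ _ => ((3 * m + 1 : ℕ) : ℕ∞) ^ n

/-- `ν` satisfies `φ`. -/
def SatCNF (m n : ℕ) (φ : Fin m → Fin 3 → Bool × Fin n) (ν : Fin n → Bool) : Prop :=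
  ∀ j : Fin m, ∃ l : Fin 3, ν (φ j l).2 = (φ j l).1

/-- Lexicographic comparison of truth assignments w.r.t. the ordering `(x_0,…,x_{n-1})`:
`ν' ≤ ν` iff they are equal or `ν` is `true` at the first index where they differ. -/
def LexLE {n : ℕ} (ν' ν : Fin n → Bool) : Prop :=
  ν' = ν ∨ ∃ i : Fin n, (∀ j < i, ν' j = ν j) ∧ ν' i ≠ ν i ∧ ν i = true

/-- `ν` is the lexicographically maximum satisfying assignment of `φ`. -/
def IsLexMax (m n : ℕ) (φ : Fin m → Fin 3 → Bool × Fin n) (ν : Fin n → Bool) : Prop :=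
  SatCNF m n φ ν ∧ ∀ ν', SatCNF m n φ ν' → LexLE ν' ν


/-! A model of finite cost satisfies the TBox, which lets every clause keep at most one of its
three role assertions; each dropped one costs `u^n`, more than all assertions `T(x_i)`
together. So an optimal model keeps exactly one edge per clause, and the assignment
"`x_i` is true unless a negative edge points to it" then satisfies `φ` and is at least as
true as the extension of `T`. The weights `u^(n-1-i)` of the assertions `T(x_i)` turn the
lexicographic order of assignments into the reverse order of the cost of their false
variables, so the cheapest possible extension of `T` is `ν_max` itself, and it is attained by
the model that keeps, in each clause, the edge to a literal made true by `ν_max`. -/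

-- The cost of the violated assertions `T(x_i)` when `T` holds exactly at the true variables
-- of `ν`.
def falseWeight {n : ℕ} (u : ℕ) (ν : Fin n → Bool) : ℕ :=
  ∑ i, if ν i then 0 else u ^ (n - 1 - i)

theorem falseWeight_succ {n : ℕ} (u : ℕ) (ν : Fin (n + 1) → Bool) :
    falseWeight u ν = (if ν 0 then 0 else u ^ n) + falseWeight u (Fin.tail ν) := by
  simp only [falseWeight, Fin.sum_univ_succ, Fin.tail, Fin.val_zero, Fin.val_succ]
  refine congrArg₂ _ (by simp) (Finset.sum_congr rfl fun i _ => ?_)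
  rw [show n + 1 - 1 - (i + 1) = n - 1 - i by omega]
  rfl

theorem falseWeight_lt_pow {u : ℕ} (hu : 2 ≤ u) :
    ∀ {n : ℕ} (ν : Fin n → Bool), falseWeight u ν < u ^ n
  | 0, _ => by simp [falseWeight]
  | n + 1, ν => by
    have ih := falseWeight_lt_pow hu (Fin.tail ν)
    have hhead : (if ν 0 then 0 else u ^ n) ≤ u ^ n := by split <;> simp
    have hpow : u ^ n * 2 ≤ u ^ (n + 1) := by rw [pow_succ]; exact Nat.mul_le_mul_left _ hu
    rw [falseWeight_succ]
    omega

theorem falseWeight_lt_of_lex {u : ℕ} (hu : 2 ≤ u) :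
    ∀ {n : ℕ} {ν' ν : Fin n → Bool} (i : Fin n), (∀ j < i, ν' j = ν j) → ν' i ≠ ν i →
      ν i = true → falseWeight u ν < falseWeight u ν'
  | n + 1, ν', ν, i, hlt, hne, hi => by
    rw [falseWeight_succ, falseWeight_succ]
    cases i using Fin.cases with
    | zero =>
      have hi' : ν' 0 = false := by simpa [hi] using hne
      have := falseWeight_lt_pow hu (Fin.tail ν)
      simp only [hi, hi', if_true, Bool.false_eq_true, if_false]
      omega
    | succ i =>
      have htail := falseWeight_lt_of_lex hu (ν' := Fin.tail ν') (ν := Fin.tail ν) i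
        (fun j hj => hlt j.succ (Fin.succ_lt_succ_iff.mpr hj)) hne hi
      rw [hlt 0 i.succ_pos]
      omega

theorem falseWeight_le_of_imp {n u : ℕ} {ν ν' : Fin n → Bool}
    (h : ∀ i, ν i = true → ν' i = true) : falseWeight u ν' ≤ falseWeight u ν :=
  Finset.sum_le_sum fun i _ => by
    cases hi : ν i
    · split <;> simp
    · simp [h i hi]

theorem eq_of_imp_of_falseWeight_le {n u : ℕ} (hu : 1 ≤ u) {ν ν' : Fin n → Bool}
    (h : ∀ i, ν i = true → ν' i = true) (hw : falseWeight u ν ≤ falseWeight u ν') :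
    ν = ν' := by
  by_contra hne
  obtain ⟨i, hi⟩ := Function.ne_iff.mp hne
  have hνi : ν i = false := by cases hν : ν i <;> simp_all
  have hν'i : ν' i = true := by cases hν' : ν' i <;> simp_all
  have hlt : falseWeight u ν' < falseWeight u ν := by
    refine Finset.sum_lt_sum (fun j _ => ?_) ⟨i, Finset.mem_univ i, ?_⟩
    · cases hj : ν j
      · split <;> simp
      · simp [h j hj]
    · simpa [hνi, hν'i] using pow_pos hu (n - 1 - i)
  omega

theorem IsLexMax.eq_of_falseWeight_le {m n : ℕ} {φ : Fin m → Fin 3 → Bool × Fin n}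
    {νmax ν : Fin n → Bool} (hmax : IsLexMax m n φ νmax) (hν : SatCNF m n φ ν)
    (hw : falseWeight (3 * m + 1) ν ≤ falseWeight (3 * m + 1) νmax) : ν = νmax := by
  rcases Nat.eq_zero_or_pos m with rfl | hm
  -- for `m = 0` the base `u = 1` is too small for `falseWeight_lt_of_lex`, but then every
  -- assignment satisfies `φ`, so `νmax` is constantly true
  · have htrue : νmax = fun _ => true := by
      rcases hmax.2 (fun _ => true) (fun j => j.elim0) with h | ⟨i, -, hne, hi⟩
      · exact h.symm
      · exact absurd hi.symm hne
    exact eq_of_imp_of_falseWeight_le le_rfl (fun i _ => by rw [htrue]) hw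
  · rcases hmax.2 ν hν with h | ⟨i, hlt, hne, hi⟩
    · exact h
    · exact absurd hw (not_le.mpr (falseWeight_lt_of_lex (by omega) i hlt hne hi))

theorem mem_interp_exR {I : Interp U} {r : RName} {d : U} :
    d ∈ (exR r).interp I ↔ ∃ e, (d, e) ∈ I.rI r := by
  simp only [exR, Concept.interp, Role.interp, Set.mem_ofPred_eq]
  exact ⟨fun ⟨e, he, _⟩ => ⟨e, he⟩, fun ⟨e, he⟩ => ⟨e, he, (I.rI_sub r _ he).2⟩⟩

theorem mem_interp_exRinv {I : Interp U} {r : RName} {d : U} :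
    d ∈ (exRinv r).interp I ↔ ∃ e, (e, d) ∈ I.rI r := by
  simp only [exRinv, Concept.interp, Role.interp, Set.mem_ofPred_eq]
  exact ⟨fun ⟨e, he, _⟩ => ⟨e, he⟩, fun ⟨e, he⟩ => ⟨e, he, (I.rI_sub r _ he).1⟩⟩

theorem vioCount_ci_neg_eq_zero_iff {I : Interp U} {B C : Concept}
    (hB : B.interp I ⊆ I.dom) :
    Axiom.vioCount I (.ci B (.neg C)) = 0 ↔ ∀ d ∈ B.interp I, d ∉ C.interp I := by
  simp only [Axiom.vioCount, Set.encard_eq_zero, vioCI, Set.sdiff_eq_empty, Concept.interp]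
  exact ⟨fun h d hd => (h hd).2, fun h d hd => ⟨hB hd, h d hd⟩⟩

theorem vioCount_exR_ci_neg_eq_zero_iff {I : Interp U} {r : RName} {C : Concept} :
    Axiom.vioCount I (.ci (exR r) (.neg C)) = 0 ↔
      ∀ d e, (d, e) ∈ I.rI r → d ∉ C.interp I := by
  rw [vioCount_ci_neg_eq_zero_iff fun d hd => ?_]
  · simp only [mem_interp_exR]
    exact ⟨fun h d e he => h d ⟨e, he⟩, fun h d ⟨e, he⟩ => h d e he⟩
  · obtain ⟨e, he⟩ := mem_interp_exR.mp hd
    exact (I.rI_sub r _ he).1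

theorem vioCount_exRinv_ci_neg_eq_zero_iff {I : Interp U} {r : RName} {C : Concept} :
    Axiom.vioCount I (.ci (exRinv r) (.neg C)) = 0 ↔
      ∀ d e, (e, d) ∈ I.rI r → d ∉ C.interp I := by
  rw [vioCount_ci_neg_eq_zero_iff fun d hd => ?_]
  · simp only [mem_interp_exRinv]
    exact ⟨fun h d e he => h d ⟨e, he⟩, fun h d ⟨e, he⟩ => h d e he⟩
  · obtain ⟨e, he⟩ := mem_interp_exRinv.mp hd
    exact (I.rI_sub r _ he).2

theorem vioCount_eq_zero_of_cost_ne_top {T : Finset Axiom} {A : Finset Assertion}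
    {wA : Assertion → ℕ∞} {I : Interp U} (h : cost T A (fun _ => ⊤) wA I ≠ ⊤) :
    ∀ τ ∈ T, Axiom.vioCount I τ = 0 := by
  intro τ hτ
  by_contra hv
  refine h (top_le_iff.mp ?_)
  calc ⊤ = ⊤ * Axiom.vioCount I τ := (ENat.top_mul hv).symm
    _ ≤ ∑ τ ∈ T, ⊤ * Axiom.vioCount I τ :=
      Finset.single_le_sum (f := fun τ => ⊤ * Axiom.vioCount I τ) (fun _ _ => zero_le) hτ
    _ ≤ cost T A (fun _ => ⊤) wA I := le_self_add

open Classical in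
theorem cost_eq_of_vioCount_eq_zero {T : Finset Axiom} {A : Finset Assertion}
    {wT : Axiom → ℕ∞} {wA : Assertion → ℕ∞} {I : Interp U}
    (hT : ∀ τ ∈ T, Axiom.vioCount I τ = 0) :
    cost T A wT wA I = ∑ α ∈ A, if α.sat I then 0 else wA α := by
  rw [cost, Finset.sum_eq_zero fun τ hτ => by rw [hT τ hτ, mul_zero], zero_add]

theorem satQ_singleton_ca_ind {I : Interp U} {A : CName} {a : IndName} :
    satQ I {QAtom.ca A (Term.ind a)} ↔ I.indI a ∈ I.cI A := by
  simp only [satQ, Finset.mem_singleton, forall_eq, QAtom.sat, Term.eval]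
  exact ⟨fun ⟨_, _, h⟩ => h, fun h => ⟨fun _ => I.indI a, fun _ => I.cI_sub A h, h⟩⟩

theorem optCost_eq_of_forall_le {T : Finset Axiom} {A : Finset Assertion}
    {wT : Axiom → ℕ∞} {wA : Assertion → ℕ∞} {c : ℕ∞}
    (hex : ∃ (U : Type) (I : Interp U), I.Proper ∧ cost T A wT wA I = c)
    (hle : ∀ (U : Type) (I : Interp U), I.Proper → c ≤ cost T A wT wA I) :
    optCost T A wT wA = c :=
  le_antisymm (sInf_le hex) (le_sInf fun _ ⟨U, I, hI, hc⟩ => hc ▸ hle U I hI)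

theorem satCopt_iff_and_satPopt_iff {T : Finset Axiom} {A : Finset Assertion}
    {wT : Axiom → ℕ∞} {wA : Assertion → ℕ∞} {q : BCQ} {P : Prop}
    (hex : ∃ (U : Type) (I : Interp U), I.Proper ∧ cost T A wT wA I = optCost T A wT wA)
    (hopt : ∀ (U : Type) (I : Interp U), I.Proper →
      cost T A wT wA I = optCost T A wT wA → (satQ I q ↔ P)) :
    (satCopt T A wT wA q ↔ P) ∧ (satPopt T A wT wA q ↔ P) := by
  obtain ⟨U₀, I₀, hI₀, hc₀⟩ := hex
  refine ⟨⟨fun h => (hopt U₀ I₀ hI₀ hc₀).mp (h U₀ I₀ hI₀ hc₀),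
    fun hP U I hI hc => (hopt U I hI hc).mpr hP⟩, ⟨fun ⟨U, I, hI, hc, hq⟩ =>
    (hopt U I hI hc).mp hq, fun hP => ⟨U₀, I₀, hI₀, hc₀, (hopt U₀ I₀ hI₀ hc₀).mpr hP⟩⟩⟩

theorem forall_mem_lexTbox {P : Axiom → Prop} :
    (∀ τ ∈ lexTbox, P τ) ↔
      (∀ l, P (.ci (exRinv (nR l)) (.neg (.atom cT)))) ∧
      (∀ a b, P (.ci (exR (pR a)) (.neg (exR (nR b))))) ∧
      (∀ a b, P (.ci (exRinv (pR a)) (.neg (exRinv (nR b))))) ∧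
      (∀ a b, a ≠ b → P (.ci (exR (pR a)) (.neg (exR (pR b))))) ∧
      (∀ a b, a ≠ b → P (.ci (exR (nR a)) (.neg (exR (nR b))))) := by
  simp only [lexTbox, Finset.forall_mem_union, Finset.forall_mem_image, Finset.mem_univ,
    Finset.mem_filter, true_and, forall_const, Prod.forall, and_assoc]

structure LexModel (I : Interp U) : Prop where
  not_true_of_neg_in : ∀ l d e, (e, d) ∈ I.rI (nR l) → d ∉ I.cI cT
  not_pos_out_neg_out : ∀ a b d e e', (d, e) ∈ I.rI (pR a) → (d, e') ∉ I.rI (nR b)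
  not_pos_in_neg_in : ∀ a b d e e', (e, d) ∈ I.rI (pR a) → (e', d) ∉ I.rI (nR b)
  pos_out_unique : ∀ a b d e e', (d, e) ∈ I.rI (pR a) → (d, e') ∈ I.rI (pR b) → a = b
  neg_out_unique : ∀ a b d e e', (d, e) ∈ I.rI (nR a) → (d, e') ∈ I.rI (nR b) → a = b

theorem lexModel_iff {I : Interp U} :
    (∀ τ ∈ lexTbox, Axiom.vioCount I τ = 0) ↔ LexModel I := by
  simp only [forall_mem_lexTbox, vioCount_exR_ci_neg_eq_zero_iff,
    vioCount_exRinv_ci_neg_eq_zero_iff, mem_interp_exR, mem_interp_exRinv, Concept.interp]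
  constructor
  · rintro ⟨h1, h2, h3, h4, h5⟩
    refine ⟨h1, fun a b d e e' he he' => h2 a b d e he ⟨e', he'⟩,
      fun a b d e e' he he' => h3 a b d e he ⟨e', he'⟩,
      fun a b d e e' he he' => by_contra fun hab => h4 a b hab d e he ⟨e', he'⟩,
      fun a b d e e' he he' => by_contra fun hab => h5 a b hab d e he ⟨e', he'⟩⟩
  · rintro ⟨h1, h2, h3, h4, h5⟩
    refine ⟨h1, fun a b d e he ⟨e', he'⟩ => h2 a b d e e' he he',
      fun a b d e he ⟨e', he'⟩ => h3 a b d e e' he he',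
      fun a b hab d e he ⟨e', he'⟩ => hab (h4 a b d e e' he he'),
      fun a b hab d e he ⟨e', he'⟩ => hab (h5 a b d e e' he he')⟩

def litRole (b : Bool) (l : Fin 3) : RName := if b then pR l else nR l

@[simp] theorem litRole_true (l : Fin 3) : litRole true l = pR l := rfl

@[simp] theorem litRole_false (l : Fin 3) : litRole false l = nR l := rfl

theorem litRole_inj {b b' : Bool} {l l' : Fin 3} :
    litRole b l = litRole b' l' ↔ b = b' ∧ l = l' := by
  revert b b' l l'; decide

theorem litRole_eq_pR {b : Bool} {l a : Fin 3} : litRole b l = pR a ↔ b = true ∧ l = a :=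
  litRole_inj (b' := true) (l' := a)

theorem litRole_eq_nR {b : Bool} {l a : Fin 3} : litRole b l = nR a ↔ b = false ∧ l = a :=
  litRole_inj (b' := false) (l' := a)

theorem xN_injective {n : ℕ} : Function.Injective (xN : Fin n → IndName) :=
  Fin.val_injective

theorem clN_injective {m n : ℕ} : Function.Injective (clN n : Fin m → IndName) :=
  fun _ _ h => Fin.val_injective (Nat.add_left_cancel h)

open Classical in
noncomputable def trueAt (I : Interp U) (n : ℕ) (i : Fin n) : Bool :=
  decide (I.indI (xN i) ∈ I.cI cT)

theorem trueAt_eq_true {I : Interp U} {n : ℕ} {i : Fin n} :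
    trueAt I n i = true ↔ I.indI (xN i) ∈ I.cI cT := by
  simp [trueAt]

-- `T` may fail at a variable without any clause forcing it, so a satisfying assignment is
-- read off the negative edges instead.
open Classical in
noncomputable def noNegEdgeAt (I : Interp U) (n : ℕ) (i : Fin n) : Bool :=
  decide (∀ l e, (e, I.indI (xN i)) ∉ I.rI (nR l))

section Reduction

variable {m n : ℕ} (φ : Fin m → Fin 3 → Bool × Fin n)

def clauseEdge (p : Fin m × Fin 3) : Assertion :=
  .ra (litRole (φ p.1 p.2).1 p.2) (clN n p.1) (xN (φ p.1 p.2).2)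

theorem lexAbox_eq : lexAbox m n φ =
    Finset.univ.image (clauseEdge φ) ∪ Finset.univ.image fun i : Fin n => .ca cT (xN i) := by
  unfold lexAbox clauseEdge litRole
  congr 2
  funext p
  split <;> rfl

theorem clauseEdge_injective : Function.Injective (clauseEdge φ) := by
  rintro ⟨j, l⟩ ⟨j', l'⟩ h
  simp only [clauseEdge, Assertion.ra.injEq] at h
  obtain ⟨hr, hj, -⟩ := h
  obtain rfl := clN_injective hj
  rw [(litRole_inj.mp hr).2]

open Classical in
noncomputable def keptEdges (I : Interp U) : Finset (Fin m × Fin 3) :=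
  Finset.univ.filter fun p => (clauseEdge φ p).sat I

theorem cost_lex_eq {I : Interp U} (hT : ∀ τ ∈ lexTbox, Axiom.vioCount I τ = 0) :
    cost lexTbox (lexAbox m n φ) (fun _ => ⊤) (lexWA m n) I =
      (((3 * m - (keptEdges φ I).card) * (3 * m + 1) ^ n +
        falseWeight (3 * m + 1) (trueAt I n) : ℕ) : ℕ∞) := by
  classical
  have hdisj : Disjoint (Finset.univ.image (clauseEdge φ))
      (Finset.univ.image fun i : Fin n => Assertion.ca cT (xN i)) :=
    Finset.disjoint_left.mpr fun α hα hα' => by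
      obtain ⟨p, -, rfl⟩ := Finset.mem_image.mp hα
      obtain ⟨i, -, hi⟩ := Finset.mem_image.mp hα'
      cases hi
  rw [cost_eq_of_vioCount_eq_zero hT, lexAbox_eq, Finset.sum_union hdisj,
    Finset.sum_image fun p _ q _ h => clauseEdge_injective φ h,
    Finset.sum_image fun i _ j _ h => xN_injective (Assertion.ca.inj h).2]
  have hedge : ∀ p, (if (clauseEdge φ p).sat I then 0 else lexWA m n (clauseEdge φ p)) =
      ((if (clauseEdge φ p).sat I then 0 else (3 * m + 1) ^ n : ℕ) : ℕ∞) := fun p => by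
    split <;> simp [clauseEdge, lexWA]
  have hvar : ∀ i : Fin n, (if (Assertion.ca cT (xN i)).sat I then 0
      else lexWA m n (.ca cT (xN i))) =
        ((if trueAt I n i then 0 else (3 * m + 1) ^ (n - 1 - i) : ℕ) : ℕ∞) := fun i => by
    have hsat : (Assertion.ca cT (xN i)).sat I ↔ trueAt I n i = true := trueAt_eq_true.symm
    simp only [hsat]
    split <;> simp [lexWA, xN]
  have hkept := Finset.card_filter_add_card_filter_not (s := Finset.univ)
    (fun p => (clauseEdge φ p).sat I)
  rw [Finset.card_univ, Fintype.card_prod, Fintype.card_fin, Fintype.card_fin] at hkept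
  simp only [hedge, hvar, ← Nat.cast_sum, ← Nat.cast_add]
  rw [Finset.sum_ite, Finset.sum_const_zero, zero_add, Finset.sum_const, smul_eq_mul,
    keptEdges, falseWeight]
  congr 3
  omega

variable {φ} in
theorem LexModel.clauseEdge_unique {I : Interp U} (hI : LexModel I) {j : Fin m} {l l' : Fin 3}
    (h : (clauseEdge φ (j, l)).sat I) (h' : (clauseEdge φ (j, l')).sat I) : l = l' := by
  simp only [clauseEdge, Assertion.sat] at h h'
  cases hb : (φ j l).1 <;> cases hb' : (φ j l').1 <;> simp only [hb, hb', litRole_true,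
    litRole_false] at h h'
  · exact hI.neg_out_unique _ _ _ _ _ h h'
  · exact (hI.not_pos_out_neg_out _ _ _ _ _ h' h).elim
  · exact (hI.not_pos_out_neg_out _ _ _ _ _ h h').elim
  · exact hI.pos_out_unique _ _ _ _ _ h h'

theorem LexModel.injOn_fst_keptEdges {I : Interp U} (hI : LexModel I) :
    Set.InjOn Prod.fst (keptEdges φ I : Set (Fin m × Fin 3)) := by
  rintro ⟨j, l⟩ hl ⟨j', l'⟩ hl' (rfl : j = j')
  simp only [keptEdges, Finset.coe_filter, Finset.mem_univ, true_and, Set.mem_ofPred_eq] at hl hl'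
  rw [hI.clauseEdge_unique hl hl']

theorem LexModel.card_keptEdges_le {I : Interp U} (hI : LexModel I) :
    (keptEdges φ I).card ≤ m := by
  simpa using Finset.card_le_card_of_injOn Prod.fst (t := Finset.univ)
    (fun _ _ => Finset.mem_coe.mpr (Finset.mem_univ _)) (hI.injOn_fst_keptEdges φ)

variable {φ}

theorem LexModel.exists_kept_of_card_eq {I : Interp U} (hI : LexModel I)
    (hcard : (keptEdges φ I).card = m) (j : Fin m) : ∃ l, (clauseEdge φ (j, l)).sat I := by
  classical
  have himage : (keptEdges φ I).image Prod.fst = Finset.univ := Finset.eq_univ_of_card _ (by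
    rw [Finset.card_image_of_injOn (hI.injOn_fst_keptEdges φ), hcard, Fintype.card_fin])
  obtain ⟨⟨j', l⟩, hl, rfl⟩ := Finset.mem_image.mp (himage ▸ Finset.mem_univ j)
  exact ⟨l, (Finset.mem_filter.mp hl).2⟩

theorem LexModel.noNegEdgeAt_of_trueAt {I : Interp U} (hI : LexModel I) {i : Fin n}
    (h : trueAt I n i = true) : noNegEdgeAt I n i = true := by
  rw [trueAt_eq_true] at h
  simp only [noNegEdgeAt, decide_eq_true_eq]
  exact fun l e he => hI.not_true_of_neg_in l _ e he h

theorem LexModel.satCNF_noNegEdgeAt {I : Interp U} (hI : LexModel I)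
    (hkept : ∀ j, ∃ l, (clauseEdge φ (j, l)).sat I) : SatCNF m n φ (noNegEdgeAt I n) := by
  intro j
  obtain ⟨l, hl⟩ := hkept j
  refine ⟨l, ?_⟩
  simp only [clauseEdge, Assertion.sat] at hl
  cases hb : (φ j l).1 <;> simp only [hb, litRole_true, litRole_false] at hl <;>
    simp only [noNegEdgeAt, decide_eq_true_eq, decide_eq_false_iff_not, not_forall, not_not]
  · exact ⟨l, _, hl⟩
  · exact fun l' e he => hI.not_pos_in_neg_in _ _ _ _ _ hl he

def lexModelCost (m : ℕ) (ν : Fin n → Bool) : ℕ :=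
  2 * m * (3 * m + 1) ^ n + falseWeight (3 * m + 1) ν

theorem IsLexMax.cost_eq_and_trueAt_eq_of_cost_le {νmax : Fin n → Bool}
    (hmax : IsLexMax m n φ νmax) {I : Interp U}
    (hc : cost lexTbox (lexAbox m n φ) (fun _ => ⊤) (lexWA m n) I ≤ lexModelCost m νmax) :
    cost lexTbox (lexAbox m n φ) (fun _ => ⊤) (lexWA m n) I = lexModelCost m νmax ∧
      trueAt I n = νmax := by
  have hT := vioCount_eq_zero_of_cost_ne_top (ne_top_of_le_ne_top (ENat.natCast_ne_top _) hc)
  have hI := lexModel_iff.mp hT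
  rw [cost_lex_eq φ hT, Nat.cast_le, lexModelCost] at hc
  have hK : (keptEdges φ I).card = m := by
    -- a clause keeping no edge costs `u^n`, more than `falseWeight u νmax`
    refine le_antisymm (hI.card_keptEdges_le φ) (not_lt.mp fun hlt => ?_)
    have hW := falseWeight_lt_pow (u := 3 * m + 1) (by omega) νmax
    have : (2 * m + 1) * (3 * m + 1) ^ n ≤ (3 * m - (keptEdges φ I).card) * (3 * m + 1) ^ n :=
      Nat.mul_le_mul_right _ (by omega)
    nlinarith
  rw [hK, show 3 * m - m = 2 * m by omega, Nat.add_le_add_iff_left] at hc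
  have himp (i : Fin n) : trueAt I n i = true → noNegEdgeAt I n i = true :=
    hI.noNegEdgeAt_of_trueAt
  have hdec : noNegEdgeAt I n = νmax :=
    hmax.eq_of_falseWeight_le (hI.satCNF_noNegEdgeAt (hI.exists_kept_of_card_eq hK))
      ((falseWeight_le_of_imp himp).trans hc)
  have htrue : trueAt I n = νmax :=
    eq_of_imp_of_falseWeight_le (by omega) (hdec ▸ himp) hc
  rw [cost_lex_eq φ hT, hK, htrue, lexModelCost, show 3 * m - m = 2 * m by omega]
  exact ⟨rfl, rfl⟩

-- Each clause `j` keeps only its edge to literal `σ j`; `T` holds at the true variables of `ν`.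
variable (φ) in
def lexWitness (σ : Fin m → Fin 3) (ν : Fin n → Bool) : Interp ℕ where
  dom := Set.univ
  indI := id
  cI _ := {a | ∃ i, ν i = true ∧ xN i = a}
  rI r := {p | ∃ j, litRole (φ j (σ j)).1 (σ j) = r ∧ p.1 = clN n j ∧ p.2 = xN (φ j (σ j)).2}
  cI_sub _ := Set.subset_univ _
  rI_sub _ _ _ := ⟨trivial, trivial⟩

variable {σ : Fin m → Fin 3} {ν : Fin n → Bool}

theorem lexWitness_lexModel (hσ : ∀ j, ν (φ j (σ j)).2 = (φ j (σ j)).1) :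
    LexModel (lexWitness φ σ ν) := by
  constructor
  · rintro l d e ⟨j, hr, -, rfl : d = _⟩ ⟨i, hi, hx⟩
    obtain rfl := xN_injective hx
    rw [hσ, (litRole_eq_nR.mp hr).1] at hi
    exact Bool.false_ne_true hi
  · rintro a b d e e' ⟨j, hr, rfl : d = _, -⟩ ⟨j', hr', hj, -⟩
    obtain rfl := clN_injective hj
    exact Bool.false_ne_true ((litRole_eq_nR.mp hr').1.symm.trans (litRole_eq_pR.mp hr).1)
  · rintro a b d e e' ⟨j, hr, -, rfl : d = _⟩ ⟨j', hr', -, hv⟩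
    have hpos := hσ j
    have hneg := hσ j'
    rw [(litRole_eq_pR.mp hr).1, xN_injective hv] at hpos
    rw [(litRole_eq_nR.mp hr').1, hpos] at hneg
    exact Bool.false_ne_true hneg.symm
  · rintro a b d e e' ⟨j, hr, rfl : d = _, -⟩ ⟨j', hr', hj, -⟩
    obtain rfl := clN_injective hj
    exact (litRole_eq_pR.mp hr).2.symm.trans (litRole_eq_pR.mp hr').2
  · rintro a b d e e' ⟨j, hr, rfl : d = _, -⟩ ⟨j', hr', hj, -⟩
    obtain rfl := clN_injective hj
    exact (litRole_eq_nR.mp hr).2.symm.trans (litRole_eq_nR.mp hr').2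

theorem sat_clauseEdge_lexWitness {j : Fin m} {l : Fin 3} :
    (clauseEdge φ (j, l)).sat (lexWitness φ σ ν) ↔ l = σ j := by
  simp only [clauseEdge, Assertion.sat, lexWitness, Set.mem_ofPred_eq, id]
  constructor
  · rintro ⟨j', hr, hj, -⟩
    obtain rfl := clN_injective hj
    exact (litRole_inj.mp hr).2.symm
  · rintro rfl
    exact ⟨j, rfl, rfl, rfl⟩

theorem trueAt_lexWitness : trueAt (lexWitness φ σ ν) n = ν := by
  funext i
  simp only [trueAt, lexWitness, Set.mem_ofPred_eq, id, xN_injective.eq_iff, exists_eq_right,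
    Bool.decide_eq_true]

theorem cost_lexWitness (hσ : ∀ j, ν (φ j (σ j)).2 = (φ j (σ j)).1) :
    cost lexTbox (lexAbox m n φ) (fun _ => ⊤) (lexWA m n) (lexWitness φ σ ν) =
      lexModelCost m ν := by
  classical
  have hkept : keptEdges φ (lexWitness φ σ ν) = Finset.univ.image fun j => (j, σ j) := by
    ext ⟨j, l⟩
    simp [keptEdges, sat_clauseEdge_lexWitness, eq_comm]
  rw [cost_lex_eq φ (lexModel_iff.mpr (lexWitness_lexModel hσ)), hkept,
    Finset.card_image_of_injective _ fun j j' h => (Prod.ext_iff.mp h).1, Finset.card_univ,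
    Fintype.card_fin, trueAt_lexWitness, lexModelCost, show 3 * m - m = 2 * m by omega]

theorem exists_lexWitness (hν : SatCNF m n φ ν) :
    ∃ I : Interp ℕ, I.Proper ∧
      cost lexTbox (lexAbox m n φ) (fun _ => ⊤) (lexWA m n) I = lexModelCost m ν ∧
      trueAt I n = ν := by
  choose σ hσ using hν
  exact ⟨lexWitness φ σ ν, fun _ => trivial, cost_lexWitness hσ, trueAt_lexWitness⟩

theorem IsLexMax.optCost_eq {νmax : Fin n → Bool} (hmax : IsLexMax m n φ νmax) :
    optCost lexTbox (lexAbox m n φ) (fun _ => ⊤) (lexWA m n) = lexModelCost m νmax := by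
  obtain ⟨I, hI, hcost, -⟩ := exists_lexWitness hmax.1
  refine optCost_eq_of_forall_le ⟨ℕ, I, hI, hcost⟩ fun U J _ => ?_
  by_contra! hlt
  exact hlt.ne (hmax.cost_eq_and_trueAt_eq_of_cost_le hlt.le).1

end Reduction

/-- For a satisfiable 3-CNF `φ` with lexicographically maximum
satisfying assignment `ν_max` and a variable `x_k`:
`K_ω ⊨꜀ᵒᵖᵗ T(x_k)` iff `K_ω ⊨ₚᵒᵖᵗ T(x_k)` iff `ν_max(x_k) = 1`. -/
theorem statement14 (m n : ℕ) (φ : Fin m → Fin 3 → Bool × Fin n)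
    (νmax : Fin n → Bool) (hmax : IsLexMax m n φ νmax) (idx : Fin n) :
    (satCopt lexTbox (lexAbox m n φ) (fun _ => ⊤) (lexWA m n)
        {QAtom.ca cT (Term.ind (xN idx))} ↔ νmax idx = true) ∧
    (satPopt lexTbox (lexAbox m n φ) (fun _ => ⊤) (lexWA m n)
        {QAtom.ca cT (Term.ind (xN idx))} ↔ νmax idx = true) := by
  obtain ⟨I₀, hI₀, hcost₀, -⟩ := exists_lexWitness hmax.1
  refine satCopt_iff_and_satPopt_iff ⟨ℕ, I₀, hI₀, hcost₀.trans hmax.optCost_eq.symm⟩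
    fun U I _ hcost => ?_
  have htrue := (hmax.cost_eq_and_trueAt_eq_of_cost_le (hcost.trans hmax.optCost_eq).le).2
  rw [satQ_singleton_ca_ind, ← htrue, trueAt_eq_true]

end DL
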